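/- Let 0 < μ < μ_ℝ and let u : ℝ → ℝ be continuously differentiable with derivative u', with u and u' square-integrable on ℝ and ∫_ℝ u(x)² dx = μ. Then E_6(u, ℝ) > 0 strictly. (Hence no function of mass strictly below μ_ℝ attains the infimum 0 of the critical energy on the line.) -/

import Mathlib

/-!
Sharp Gagliardo–Nirenberg inequality `π² ∫ u⁶ ≤ 4 (∫ u²)² ∫ u'²` by a Riccati argument.
Let `m` be a primitive of some `w ≥ u²` with `∫_{-∞}^x u² ≤ m < S` and `q S < π`. Then
`c = cot (q m)` solves `c' = -q w (1 + c²)`, and completing the square gives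
`q (u⁴ c)' ≤ 4 u'² - q² u⁶`. At `+∞`, `q u⁴ c ≥ q u⁴ cot (q S) → 0`; at `-∞`, `cot θ ≤ 1/θ` and
`u⁴ ≤ 4 m ∫_{-∞}^x u'²` give `q u⁴ c ≤ 4 ∫_{-∞}^x u'² → 0`. Integrating over `ℝ`,
`q² ∫ u⁶ ≤ 4 ∫ u'²` for every `q < π / ∫ u²`. For `∫ u² = μ < √3 π / 2` this gives
`∫ u⁶ < 3 ∫ u'²`, i.e. `E₆(u, ℝ) > 0`, since `u' ≢ 0`.
-/

open MeasureTheory Filter Set Real Topology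

section Improper

variable {E : Type*} [NormedAddCommGroup E] [NormedSpace ℝ E] {f : ℝ → E}

theorem hasDerivAt_setIntegral_Iic [CompleteSpace E] (hf : Continuous f) (hfi : Integrable f)
    (a : ℝ) :
    HasDerivAt (fun x => ∫ t in Iic x, f t) (f a) a := by
  have hsplit : (fun x => ∫ t in Iic x, f t) =
      fun x => (∫ t in Iic 0, f t) + ∫ t in 0..x, f t := by
    funext x
    rw [← intervalIntegral.integral_Iic_sub_Iic hfi.integrableOn hfi.integrableOn, add_sub_cancel]
  rw [hsplit]
  exact (intervalIntegral.integral_hasDerivAt_right hfi.intervalIntegrable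
    (hf.stronglyMeasurableAtFilter _ _) hf.continuousAt).const_add _

theorem tendsto_setIntegral_Iic_atBot (hfi : Integrable f) :
    Tendsto (fun x => ∫ t in Iic x, f t) atBot (𝓝 0) := by
  have h := (intervalIntegral_tendsto_integral_Iic 0 hfi.integrableOn tendsto_id).const_sub
    (∫ t in Iic 0, f t)
  rw [sub_self] at h
  refine h.congr fun x => ?_
  rw [← intervalIntegral.integral_Iic_sub_Iic hfi.integrableOn hfi.integrableOn, sub_sub_cancel]
  rfl

end Improper

theorem integral_nonneg_of_hasDerivAt_le {F F' g h l : ℝ → ℝ}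
    (hF : ∀ x, HasDerivAt F (F' x) x) (hg : Integrable g) (hF'g : ∀ x, F' x ≤ g x)
    (hFh : F ≤ᶠ[atBot] h) (hh : Tendsto h atBot (𝓝 0))
    (hlF : l ≤ᶠ[atTop] F) (hl : Tendsto l atTop (𝓝 0)) :
    0 ≤ ∫ x, g x := by
  have hFcont : Continuous F := continuous_iff_continuousAt.2 fun x => (hF x).continuousAt
  have hlower : Tendsto (fun x => l x - h (-x)) atTop (𝓝 (0 - 0)) :=
    hl.sub (hh.comp tendsto_neg_atTop_atBot)
  rw [sub_zero] at hlower
  refine le_of_tendsto_of_tendsto hlower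
    (intervalIntegral_tendsto_integral hg tendsto_neg_atTop_atBot tendsto_id) ?_
  filter_upwards [hlF, tendsto_neg_atTop_atBot.eventually hFh, eventually_ge_atTop 0]
    with x hlx hhx hx
  calc l x - h (-x) ≤ F x - F (-x) := sub_le_sub hlx hhx
    _ ≤ ∫ t in -x..x, g t :=
      intervalIntegral.sub_le_integral_of_hasDeriv_right_of_le (by linarith) hFcont.continuousOn
        (fun t _ => (hF t).hasDerivWithinAt) hg.integrableOn fun t _ => hF'g t

namespace Real

theorem cot_le_inv {θ : ℝ} (h0 : 0 < θ) (hπ : θ < π) : cot θ ≤ θ⁻¹ := by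
  rw [cot_eq_cos_div_sin]
  have hsin := sin_pos_of_pos_of_lt_pi h0 hπ
  rcases lt_or_ge θ (π / 2) with hθ | hθ
  · have hcos : 0 < cos θ := cos_pos_of_mem_Ioo ⟨by linarith, hθ⟩
    have htan := lt_tan h0 hθ
    rw [tan_eq_sin_div_cos, lt_div_iff₀ hcos] at htan
    rw [div_le_iff₀ hsin, inv_mul_eq_div, le_div_iff₀ h0]
    linarith
  · have hcos : cos θ ≤ 0 := cos_nonpos_of_pi_div_two_le_of_le hθ (by linarith)
    exact (div_nonpos_of_nonpos_of_nonneg hcos hsin.le).trans (inv_pos.2 h0).le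

theorem cot_le_cot {a b : ℝ} (ha : 0 < a) (hab : a ≤ b) (hb : b < π) : cot b ≤ cot a := by
  rw [cot_eq_cos_div_sin, cot_eq_cos_div_sin,
    div_le_div_iff₀ (sin_pos_of_pos_of_lt_pi (ha.trans_le hab) hb)
      (sin_pos_of_pos_of_lt_pi ha (hab.trans_lt hb))]
  have := sin_nonneg_of_nonneg_of_le_pi (sub_nonneg.2 hab) (by linarith)
  rw [sin_sub] at this
  linarith

theorem hasDerivAt_cot {x : ℝ} (hx : sin x ≠ 0) : HasDerivAt cot (-(1 + cot x ^ 2)) x := by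
  have h := (hasDerivAt_cos x).div (hasDerivAt_sin x) hx
  rw [show cot = fun y => cos y / sin y from funext fun y => cot_eq_cos_div_sin y]
  refine h.congr_deriv ?_
  show _ = -(1 + (cos x / sin x) ^ 2)
  field_simp
  ring

end Real

/-- With `c = cot (q m)` and `m' = w`, the left side is `q (y⁴ c)'`; the two sides differ by
`(2 v - q y³ c)² + q² y⁴ (w - y²) (1 + c²)`. -/
theorem mul_deriv_pow_four_mul_cot_le {q y v c w : ℝ} (hw : y ^ 2 ≤ w) :
    q * (4 * y ^ 3 * v * c + y ^ 4 * (-(1 + c ^ 2) * (q * w))) ≤ 4 * v ^ 2 - q ^ 2 * y ^ 6 := by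
  nlinarith [sq_nonneg (2 * v - q * y ^ 3 * c),
    mul_nonneg (mul_nonneg (mul_nonneg (sq_nonneg q) (pow_nonneg (sq_nonneg y) 2))
      (sub_nonneg.2 hw)) (add_nonneg zero_le_one (sq_nonneg c))]


theorem exists_hasDerivAt_majorant_of_integral_lt {v : ℝ → ℝ} (hv : Continuous v)
    (hvi : Integrable v) (hv0 : ∀ x, 0 ≤ v x) {S : ℝ} (hS : ∫ x, v x < S) :
    ∃ m w : ℝ → ℝ, (∀ x, HasDerivAt m (w x) x) ∧ (∀ x, v x ≤ w x) ∧
      (∀ x, ∫ t in Iic x, v t ≤ m x) ∧ (∀ x, 0 < m x) ∧ ∀ x, m x < S := by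
  -- `ε (arctan x + π / 2)` keeps `m` positive where `v` vanishes on a half-line.
  set ε := (S - ∫ x, v x) / π
  have hε : 0 < ε := div_pos (sub_pos.2 hS) pi_pos
  refine ⟨fun x => (∫ t in Iic x, v t) + ε * (arctan x + π / 2),
    fun x => v x + ε * (1 + x ^ 2)⁻¹, fun x => ?_, fun x => ?_, ?_⟩
  · exact (hasDerivAt_setIntegral_Iic hv hvi x).add
      ((hasDerivAt_arctan' x).add_const _ |>.const_mul ε)
  · have : 0 < ε * (1 + x ^ 2)⁻¹ := by positivity
    linarith
  have hε_pi : ε * π = S - ∫ x, v x := div_mul_cancel₀ _ pi_pos.ne'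
  have hA0 x : 0 ≤ ∫ t in Iic x, v t := setIntegral_nonneg measurableSet_Iic fun t _ => hv0 t
  have hA x : ∫ t in Iic x, v t ≤ ∫ t, v t := setIntegral_le_integral hvi (.of_forall hv0)
  have harctan x : 0 < ε * (arctan x + π / 2) ∧ ε * (arctan x + π / 2) < ε * π :=
    ⟨mul_pos hε (by linarith [neg_pi_div_two_lt_arctan x]),
      mul_lt_mul_of_pos_left (by linarith [arctan_lt_pi_div_two x]) hε⟩
  refine ⟨fun x => ?_, fun x => ?_, fun x => ?_⟩ <;> linarith [hA0 x, hA x, harctan x]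

section

variable {u u' : ℝ → ℝ}

theorem integrable_two_mul_mul_deriv (hderiv : ∀ x, HasDerivAt u (u' x) x)
    (hu : Integrable fun x => u x ^ 2) (hu' : Integrable fun x => u' x ^ 2) :
    Integrable fun x => 2 * u x * u' x := by
  have hu_meas : AEStronglyMeasurable u :=
    (continuous_iff_continuousAt.2 fun x => (hderiv x).continuousAt).aestronglyMeasurable
  have hu'_meas : AEStronglyMeasurable u' := by
    rw [← funext fun x => (hderiv x).deriv]
    exact (measurable_deriv u).aestronglyMeasurable
  have h := ((memLp_two_iff_integrable_sq hu_meas).2 hu).integrable_mul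
    ((memLp_two_iff_integrable_sq hu'_meas).2 hu')
  simpa only [mul_assoc, Pi.mul_apply] using h.const_mul 2

theorem sq_eq_integral_Iic (hderiv : ∀ x, HasDerivAt u (u' x) x)
    (hu : Integrable fun x => u x ^ 2) (hu' : Integrable fun x => u' x ^ 2) (a : ℝ) :
    u a ^ 2 = ∫ x in Iic a, 2 * u x * u' x := by
  have hsq : ∀ x, HasDerivAt (fun y => u y ^ 2) (2 * u x * u' x) x := fun x => by
    simpa using (hderiv x).fun_pow 2
  have hint := (integrable_two_mul_mul_deriv hderiv hu hu').integrableOn (s := Iic a)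
  rw [integral_Iic_of_hasDerivAt_of_tendsto (hsq a).continuousAt.continuousWithinAt
    (fun x _ => hsq x) hint
    (tendsto_zero_of_hasDerivAt_of_integrableOn_Iic (fun x _ => hsq x) hint hu.integrableOn),
    sub_zero]

theorem pow_four_le_integral_Iic (hderiv : ∀ x, HasDerivAt u (u' x) x)
    (hu : Integrable fun x => u x ^ 2) (hu' : Integrable fun x => u' x ^ 2) (a : ℝ) :
    u a ^ 4 ≤ 4 * (∫ x in Iic a, u x ^ 2) * ∫ x in Iic a, u' x ^ 2 := by
  set A := ∫ x in Iic a, u x ^ 2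
  set D := ∫ x in Iic a, u' x ^ 2
  -- Cauchy–Schwarz for `u a ^ 2 = ∫ x in Iic a, 2 * u x * u' x`, in discriminant form.
  have hquad : ∀ t : ℝ, 0 ≤ A * (t * t) + -(u a ^ 2) * t + D := by
    intro t
    have : t * u a ^ 2 ≤ t ^ 2 * A + D := by
      calc t * u a ^ 2 = ∫ x in Iic a, t * (2 * u x * u' x) := by
            rw [integral_const_mul, sq_eq_integral_Iic hderiv hu hu']
        _ ≤ ∫ x in Iic a, (t ^ 2 * u x ^ 2 + u' x ^ 2) := by
            refine integral_mono
              ((integrable_two_mul_mul_deriv hderiv hu hu').const_mul t).integrableOn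
              ((hu.const_mul _).add hu').integrableOn fun x => ?_
            nlinarith [sq_nonneg (t * u x - u' x)]
        _ = t ^ 2 * A + D := by
            rw [integral_add (hu.const_mul _).integrableOn hu'.integrableOn, integral_const_mul]
    linarith
  have := discrim_le_zero hquad
  rw [discrim] at this
  nlinarith

theorem pow_four_le_integral (hderiv : ∀ x, HasDerivAt u (u' x) x)
    (hu : Integrable fun x => u x ^ 2) (hu' : Integrable fun x => u' x ^ 2) (a : ℝ) :
    u a ^ 4 ≤ 4 * (∫ x, u x ^ 2) * ∫ x, u' x ^ 2 := by
  have hsq {f : ℝ → ℝ} (hf : Integrable fun x => f x ^ 2) :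
      ∫ x in Iic a, f x ^ 2 ≤ ∫ x, f x ^ 2 :=
    setIntegral_le_integral hf (.of_forall fun x => sq_nonneg _)
  exact (pow_four_le_integral_Iic hderiv hu hu' a).trans <|
    mul_le_mul (mul_le_mul_of_nonneg_left (hsq hu) (by norm_num)) (hsq hu')
      (setIntegral_nonneg measurableSet_Iic fun x _ => sq_nonneg _)
      (mul_nonneg (by norm_num) (integral_nonneg fun x => sq_nonneg _))

theorem integrable_pow_six (hderiv : ∀ x, HasDerivAt u (u' x) x)
    (hu : Integrable fun x => u x ^ 2) (hu' : Integrable fun x => u' x ^ 2) :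
    Integrable fun x => u x ^ 6 := by
  have hu_cont : Continuous u := continuous_iff_continuousAt.2 fun x => (hderiv x).continuousAt
  refine (hu.const_mul (4 * (∫ x, u x ^ 2) * ∫ x, u' x ^ 2)).mono'
    (hu_cont.pow 6).aestronglyMeasurable (.of_forall fun x => ?_)
  rw [Real.norm_eq_abs, abs_of_nonneg (by positivity), show u x ^ 6 = u x ^ 4 * u x ^ 2 by ring]
  exact mul_le_mul_of_nonneg_right (pow_four_le_integral hderiv hu hu' x) (sq_nonneg _)

theorem integral_deriv_sq_pos (hderiv : ∀ x, HasDerivAt u (u' x) x)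
    (hu : Integrable fun x => u x ^ 2) (hu' : Integrable fun x => u' x ^ 2)
    (hmass : 0 < ∫ x, u x ^ 2) : 0 < ∫ x, u' x ^ 2 := by
  refine (integral_nonneg fun x => sq_nonneg (u' x)).lt_of_ne fun hK => hmass.ne' ?_
  have hzero : ∀ x, u x = 0 := fun x => by
    have := pow_four_le_integral hderiv hu hu' x
    rw [← hK, mul_zero] at this
    exact pow_eq_zero_iff (n := 4) (by norm_num) |>.1 (le_antisymm this (by positivity))
  simp [hzero]

theorem sq_mul_integral_pow_six_le_of_majorant (hderiv : ∀ x, HasDerivAt u (u' x) x)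
    (hu : Integrable fun x => u x ^ 2) (hu' : Integrable fun x => u' x ^ 2) {m w : ℝ → ℝ}
    (hm : ∀ x, HasDerivAt m (w x) x) (hw : ∀ x, u x ^ 2 ≤ w x)
    (hmA : ∀ x, ∫ t in Iic x, u t ^ 2 ≤ m x) (hm0 : ∀ x, 0 < m x) {q S : ℝ}
    (hmS : ∀ x, m x ≤ S) (hq : 0 < q) (hSπ : q * S < π) :
    q ^ 2 * ∫ x, u x ^ 6 ≤ 4 * ∫ x, u' x ^ 2 := by
  have hθ0 : ∀ x, 0 < q * m x := fun x => mul_pos hq (hm0 x)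
  have hθS : ∀ x, q * m x ≤ q * S := fun x => mul_le_mul_of_nonneg_left (hmS x) hq.le
  set F := fun x => q * (u x ^ 4 * cot (q * m x))
  have hF : ∀ x, HasDerivAt F (q * (4 * u x ^ 3 * u' x * cot (q * m x) +
      u x ^ 4 * (-(1 + cot (q * m x) ^ 2) * (q * w x)))) x := fun x => by
    have hsin : sin (q * m x) ≠ 0 :=
      (sin_pos_of_pos_of_lt_pi (hθ0 x) ((hθS x).trans_lt hSπ)).ne'
    have h4 : HasDerivAt (fun y => u y ^ 4) (4 * u x ^ 3 * u' x) x := by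
      simpa using (hderiv x).fun_pow 4
    exact (h4.mul ((hasDerivAt_cot hsin).comp x ((hm x).const_mul q))).const_mul q
  set D := fun x => ∫ t in Iic x, u' t ^ 2
  have hbot : ∀ x, F x ≤ 4 * D x := fun x => by
    have hD : 0 ≤ D x := setIntegral_nonneg measurableSet_Iic fun t _ => sq_nonneg _
    have hm0' := (hm0 x).ne'
    calc F x ≤ q * (u x ^ 4 * (q * m x)⁻¹) :=
          mul_le_mul_of_nonneg_left (mul_le_mul_of_nonneg_left
            (cot_le_inv (hθ0 x) ((hθS x).trans_lt hSπ)) (by positivity)) hq.le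
      _ = u x ^ 4 / m x := by field_simp
      _ ≤ 4 * m x * D x / m x := by
          refine div_le_div_of_nonneg_right ?_ (hm0 x).le
          exact (pow_four_le_integral_Iic hderiv hu hu' x).trans
            (mul_le_mul_of_nonneg_right (mul_le_mul_of_nonneg_left (hmA x) (by norm_num)) hD)
      _ = 4 * D x := by field_simp
  have htop : ∀ x, q * (u x ^ 4 * cot (q * S)) ≤ F x := fun x =>
    mul_le_mul_of_nonneg_left (mul_le_mul_of_nonneg_left
      (cot_le_cot (hθ0 x) (hθS x) hSπ) (by positivity)) hq.le
  have hsq_top : Tendsto (fun x => u x ^ 2) atTop (𝓝 0) :=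
    tendsto_zero_of_hasDerivAt_of_integrableOn_Ioi (a := 0)
      (fun x _ => by simpa using (hderiv x).fun_pow 2)
      (integrable_two_mul_mul_deriv hderiv hu hu').integrableOn hu.integrableOn
  have hlim_top : Tendsto (fun x => q * (u x ^ 4 * cot (q * S))) atTop (𝓝 0) := by
    simpa [← pow_mul] using ((hsq_top.pow 2).mul_const (cot (q * S))).const_mul q
  have hu6 := integrable_pow_six hderiv hu hu'
  have hnonneg := integral_nonneg_of_hasDerivAt_le hF
    (g := fun x => 4 * u' x ^ 2 - q ^ 2 * u x ^ 6) ((hu'.const_mul 4).sub (hu6.const_mul _))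
    (fun x => mul_deriv_pow_four_mul_cot_le (hw x))
    (.of_forall hbot) (by simpa using (tendsto_setIntegral_Iic_atBot hu').const_mul 4)
    (.of_forall htop) hlim_top
  rwa [integral_sub (hu'.const_mul 4) (hu6.const_mul _), integral_const_mul, integral_const_mul,
    sub_nonneg] at hnonneg

theorem pi_sq_mul_integral_pow_six_le_of_lt (hderiv : ∀ x, HasDerivAt u (u' x) x)
    (hu : Integrable fun x => u x ^ 2) (hu' : Integrable fun x => u' x ^ 2) {T : ℝ}
    (hT : ∫ x, u x ^ 2 < T) :
    π ^ 2 * ∫ x, u x ^ 6 ≤ 4 * T ^ 2 * ∫ x, u' x ^ 2 := by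
  have hu_cont : Continuous u := continuous_iff_continuousAt.2 fun x => (hderiv x).continuousAt
  have hT0 : 0 < T := (integral_nonneg fun x => sq_nonneg (u x)).trans_lt hT
  obtain ⟨S, hμS, hST⟩ := exists_between hT
  obtain ⟨m, w, hm, hw, hmA, hm0, hmS⟩ := exists_hasDerivAt_majorant_of_integral_lt
    (v := fun x => u x ^ 2) (hu_cont.pow 2) hu (fun x => sq_nonneg (u x)) hμS
  have hq : 0 < π / T := div_pos pi_pos hT0
  have hqS : π / T * S < π := by
    calc π / T * S < π / T * T := mul_lt_mul_of_pos_left hST hq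
      _ = π := div_mul_cancel₀ _ hT0.ne'
  have hGN := sq_mul_integral_pow_six_le_of_majorant hderiv hu hu' hm hw hmA hm0
    (fun x => (hmS x).le) hq hqS
  rw [div_pow, div_mul_eq_mul_div, div_le_iff₀ (by positivity)] at hGN
  linarith

theorem pi_sq_mul_integral_pow_six_le (hderiv : ∀ x, HasDerivAt u (u' x) x)
    (hu : Integrable fun x => u x ^ 2) (hu' : Integrable fun x => u' x ^ 2) :
    π ^ 2 * ∫ x, u x ^ 6 ≤ 4 * (∫ x, u x ^ 2) ^ 2 * ∫ x, u' x ^ 2 := by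
  have hlim : Tendsto (fun T => 4 * T ^ 2 * ∫ x, u' x ^ 2) (𝓝[>] (∫ x, u x ^ 2))
      (𝓝 (4 * (∫ x, u x ^ 2) ^ 2 * ∫ x, u' x ^ 2)) :=
    ((continuous_const.mul (continuous_pow 2)).mul continuous_const).continuousAt.tendsto.mono_left
      nhdsWithin_le_nhds
  exact ge_of_tendsto hlim (eventually_nhdsWithin_of_forall fun T hT =>
    pi_sq_mul_integral_pow_six_le_of_lt hderiv hu hu' hT)

end

theorem critical_energy_strictly_positive_line_general
    (μ : ℝ) (hμ0 : 0 < μ) (hμ : μ < Real.sqrt 3 * Real.pi / 2)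
    (u u' : ℝ → ℝ)
    (hderiv : ∀ x, HasDerivAt u (u' x) x)
    (hu2 : Integrable (fun x => u x ^ 2))
    (hu'2 : Integrable (fun x => u' x ^ 2))
    (hmass : ∫ x, u x ^ 2 = μ) :
    (1 / 2) * (∫ x, u' x ^ 2) - (1 / 6) * (∫ x, |u x| ^ 6) > 0 := by
  have hGN := pi_sq_mul_integral_pow_six_le hderiv hu2 hu'2
  have hK := integral_deriv_sq_pos hderiv hu2 hu'2 (hmass ▸ hμ0)
  have hμ_sq : 4 * μ ^ 2 < 3 * π ^ 2 := by
    have h3 : Real.sqrt 3 ^ 2 = 3 := Real.sq_sqrt (by norm_num)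
    nlinarith [pi_pos]
  have habs : ∫ x, |u x| ^ 6 = ∫ x, u x ^ 6 := by simp only [Even.pow_abs ⟨3, rfl⟩]
  rw [hmass] at hGN
  have hP : π ^ 2 * ∫ x, u x ^ 6 < π ^ 2 * (3 * ∫ x, u' x ^ 2) := by
    nlinarith [mul_lt_mul_of_pos_right hμ_sq hK]
  have := lt_of_mul_lt_mul_left hP (sq_nonneg π)
  rw [habs]
  linarith

/-- For `0 < μ < μ_ℝ = √3 π / 2` and `u` continuously differentiable with `u, u'`
square-integrable on ℝ and mass `∫ u² = μ`, the critical NLS energy is strictly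
positive: `E_6(u,ℝ) > 0`. -/
theorem critical_energy_strictly_positive_line
    (μ : ℝ) (hμ0 : 0 < μ) (hμ : μ < Real.sqrt 3 * Real.pi / 2)
    (u u' : ℝ → ℝ)
    (hderiv : ∀ x, HasDerivAt u (u' x) x)
    (hcont : Continuous u')
    (hu2 : Integrable (fun x => u x ^ 2))
    (hu'2 : Integrable (fun x => u' x ^ 2))
    (hmass : ∫ x, u x ^ 2 = μ) :
    (1 / 2) * (∫ x, u' x ^ 2) - (1 / 6) * (∫ x, |u x| ^ 6) > 0 :=
  critical_energy_strictly_positive_line_general μ hμ0 hμ u u' hderiv hu2 hu'2 hmass
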